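/- arXiv:1301.1293 — 2 statements merged into one kernel-verified Lean document; each statement's English description precedes it below -/
import Mathlib

section
/- Fix N ≥ 1 and assume γ̲ := inf{γ₁(x₁,x₂) : x₁ ≥ 1, x₂ ≥ 0} > 0. Let (X₁ᴺ, X₂ᴺ) be an ℕ²-valued càdlàg adapted process satisfying the martingale property for B_N with the function f(x₁,x₂) = x₁, with E[X₁ᴺ(0)] < ∞ and ∫₀ᵗ E[λ₁(X₁ᴺ(s),X₂ᴺ(s))] ds < ∞ for all t. Then for every t ≥ 0: γ̲ · N · E[∫₀ᵗ 1_{X₁ᴺ(s) ≥ 1} ds] ≤ E[X₁ᴺ(0)] + ∫₀ᵗ E[λ₁(X₁ᴺ(s),X₂ᴺ(s))] ds. -/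
/-!
Write `Mₜ = X₁(t) - X₁(0) - ∫₀ᵗ (λ₁ - N γ₁)(X(s)) ds`, which is the given martingale because
`B_N` maps `f(x) = x₁` to `λ₁ - N γ₁`. Pathwise,
`γ̲ N ∫₀ᵗ 1{X₁ ≥ 1} ≤ N ∫₀ᵗ γ₁(X) = Mₜ - X₁(t) + X₁(0) + ∫₀ᵗ λ₁(X) ≤ Mₜ + X₁(0) + ∫₀ᵗ λ₁(X)`,
and taking expectations (`E Mₜ = 0`, Fubini for `λ₁`) gives the bound.

The delicate point is that this identity needs `∫₀ᵗ γ₁(X) < ∞` almost surely: a Bochner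
integral of a non-integrable function is `0`, so on paths where `∫₀ᵗ γ₁(X) = ∞` the martingale
carries no information at time `t`. A rate evaluated along a right-continuous path is integrable
on a short interval to the right of every point, so if `∫₀ᵗ γ₁(X) = ∞` while `∫₀ᵗ λ₁(X) < ∞`,
then `∫₀ᵛ γ₁(X)` is finite but arbitrarily large at dyadic times `v` below its explosion time,
and `M` is unbounded above on the dyadic grid of `[0, t]`. Doob's maximal inequality for `M⁺`
on the finite grids `{j t / 2ⁿ}` shows that this happens with probability zero.
-/

open MeasureTheory Filter
open scoped ENNReal

/-- The scaled generator `B_N` of the two-dimensional discrete birth-and-death model. -/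
noncomputable def BN (lam1 gam1 lam2 gam2 : ℕ × ℕ → ℝ) (N : ℕ)
    (f : ℕ × ℕ → ℝ) (p : ℕ × ℕ) : ℝ :=
  lam1 p * (f (p.1 + 1, p.2) - f p) + (N : ℝ) * gam1 p * (f (p.1 - 1, p.2) - f p)
    + (N : ℝ) * lam2 p * (f (p.1, p.2 + 1) - f p) + gam2 p * (f (p.1, p.2 - 1) - f p)

open Set Topology
open scoped NNReal

theorem tendsto_ceil_mul_two_pow_div_nhdsGE (s : ℝ) :
    Tendsto (fun n : ℕ => (⌈s * 2 ^ n⌉ : ℝ) / 2 ^ n) atTop (𝓝[≥] s) := by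
  have h2n (n : ℕ) : (0 : ℝ) < 2 ^ n := by positivity
  have hge (n : ℕ) : s ≤ (⌈s * 2 ^ n⌉ : ℝ) / 2 ^ n :=
    (le_div_iff₀ (h2n n)).2 (Int.le_ceil _)
  have hle (n : ℕ) : (⌈s * 2 ^ n⌉ : ℝ) / 2 ^ n ≤ s + (1 / 2) ^ n := by
    rw [div_le_iff₀ (h2n n), add_mul, ← mul_pow, one_div, inv_mul_cancel₀ two_ne_zero,
      one_pow]
    exact (Int.ceil_lt_add_one _).le
  have hlim : Tendsto (fun n : ℕ => s + (1 / 2 : ℝ) ^ n) atTop (𝓝 s) := by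
    simpa using tendsto_const_nhds.add
      (tendsto_pow_atTop_nhds_zero_of_lt_one (by norm_num : (0 : ℝ) ≤ 1 / 2) (by norm_num))
  exact tendsto_nhdsWithin_iff.2
    ⟨tendsto_of_tendsto_of_tendsto_of_le_of_le tendsto_const_nhds hlim hge hle,
      Eventually.of_forall hge⟩

theorem measurable_uncurry_of_continuousWithinAt_Ici {Ω β : Type*} [MeasurableSpace Ω]
    [TopologicalSpace β] [TopologicalSpace.PseudoMetrizableSpace β] [MeasurableSpace β]
    [BorelSpace β] {X : ℝ → Ω → β} (hX : ∀ s, Measurable (X s))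
    (hc : ∀ ω s, ContinuousWithinAt (fun u => X u ω) (Ici s) s) :
    Measurable (fun q : ℝ × Ω => X q.1 q.2) := by
  refine measurable_of_tendsto_metrizable
    (f := fun n (q : ℝ × Ω) => X ((⌈q.1 * 2 ^ n⌉ : ℝ) / 2 ^ n) q.2) (fun n => ?_)
    (tendsto_pi_nhds.2 fun q => (hc q.2 q.1).tendsto.comp
      (tendsto_ceil_mul_two_pow_div_nhdsGE q.1))
  have hgrid : Measurable fun r : Ω × ℤ => X ((r.2 : ℝ) / 2 ^ n) r.1 :=
    measurable_from_prod_countable_left fun k => hX ((k : ℝ) / 2 ^ n)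
  exact hgrid.comp
    (measurable_snd.prodMk (Int.measurable_ceil.comp (measurable_fst.mul_const _)))

theorem ContinuousWithinAt.exists_integrableOn_Ioc {g : ℝ → ℝ} (hgm : Measurable g) {s : ℝ}
    (hgc : ContinuousWithinAt g (Ici s) s) : ∃ u > s, IntegrableOn g (Ioc s u) := by
  obtain ⟨S, hS, hgS⟩ := hgc.integrableAtFilter
    hgm.stronglyMeasurable.stronglyMeasurableAtFilter (volume.finiteAt_nhdsWithin s (Ici s))
  obtain ⟨u, hu, hsub⟩ := mem_nhdsGE_iff_exists_Ico_subset.1 hS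
  refine ⟨(s + u) / 2, by linarith [hu.out], hgS.mono_set fun x hx => hsub ⟨hx.1.le, ?_⟩⟩
  linarith [hx.2, hu.out]

theorem exists_lt_integral_Ioc_of_not_integrableOn {f : ℝ → ℝ} (hf : 0 ≤ f) {a b : ℝ}
    (hint : ∀ u ∈ Ico a b, IntegrableOn f (Ioc a u)) (hb : ¬ IntegrableOn f (Ioc a b))
    (K : ℝ) : ∃ u ∈ Ico a b, K < ∫ x in Ioc a u, f x := by
  have hab : a < b := by
    by_contra! h
    exact hb (by simp [Ioc_eq_empty_of_le h])
  by_contra! hK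
  set u : ℕ → ℝ := fun n => max a (b - 1 / (n + 1))
  have hu (n : ℕ) : u n ∈ Ico a b := ⟨le_max_left _ _, max_lt hab (by simp; positivity)⟩
  have hlim : Tendsto u atTop (𝓝 b) := by
    have := (tendsto_const_nhds (x := a)).max
      (tendsto_const_nhds (x := b).sub tendsto_one_div_add_atTop_nhds_zero_nat)
    simpa [u, max_eq_right hab.le] using this
  refine hb (integrableOn_Ioc_of_intervalIntegral_norm_bounded_right (I := K)
    (fun n => hint _ (hu n)) hlim (Eventually.of_forall fun n => ?_))
  simpa only [Real.norm_of_nonneg (hf _)] using hK _ (hu n)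

theorem exists_dyadic_mem_Ico {t u a : ℝ} (hu : 0 ≤ u) (hua : u < a) (hat : a ≤ t) :
    ∃ n j : ℕ, j ≤ 2 ^ n ∧ (j : ℝ) * t / 2 ^ n ∈ Ico u a := by
  have ht : 0 < t := by linarith
  obtain ⟨n, hn⟩ := exists_pow_lt_of_lt_one (div_pos (sub_pos.2 hua) ht)
    (by norm_num : (1 : ℝ) / 2 < 1)
  have h2n : (0 : ℝ) < 2 ^ n := by positivity
  have hmesh : t / 2 ^ n < a - u := by
    rw [div_pow, one_pow, lt_div_iff₀ ht] at hn
    calc t / 2 ^ n = 1 / 2 ^ n * t := by ring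
      _ < a - u := hn
  set j := ⌈u * 2 ^ n / t⌉₊
  have hj : (j : ℝ) * t / 2 ^ n ∈ Ico u a := by
    constructor
    · rw [le_div_iff₀ h2n, ← div_le_iff₀ ht]
      exact Nat.le_ceil _
    · have := Nat.ceil_lt_add_one (by positivity : 0 ≤ u * 2 ^ n / t)
      calc (j : ℝ) * t / 2 ^ n < (u * 2 ^ n / t + 1) * t / 2 ^ n := by gcongr
        _ = u + t / 2 ^ n := by field_simp
        _ < a := by linarith
  refine ⟨n, j, ?_, hj⟩
  have : (j : ℝ) * t < 2 ^ n * t := by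
    have := (div_lt_iff₀ h2n).1 (hj.2.trans_le hat)
    linarith
  exact_mod_cast (lt_of_mul_lt_mul_right this ht.le).le

theorem dyadic_mem_Icc {t : ℝ} (ht : 0 ≤ t) {n j : ℕ} (hj : j ≤ 2 ^ n) :
    (j : ℝ) * t / 2 ^ n ∈ Icc 0 t := by
  refine ⟨by positivity, (div_le_iff₀ (by positivity)).2 ?_⟩
  rw [mul_comm t]
  gcongr
  exact_mod_cast hj

theorem exists_dyadic_le_integral_of_not_integrableOn {g : ℝ → ℝ} (hg0 : 0 ≤ g)
    (hgm : Measurable g) (hgc : ∀ s, ContinuousWithinAt g (Ici s) s) {t : ℝ}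
    (ht : ¬ IntegrableOn g (Ioc 0 t)) (K : ℝ) :
    ∃ n j : ℕ, j ≤ 2 ^ n ∧ IntegrableOn g (Ioc 0 ((j : ℝ) * t / 2 ^ n)) ∧
      K ≤ ∫ s in Ioc 0 ((j : ℝ) * t / 2 ^ n), g s := by
  have ht0 : 0 ≤ t := by
    by_contra! h
    exact ht (by simp [Ioc_eq_empty_of_le h.le])
  -- `τ` is the explosion time of `u ↦ ∫₀ᵘ g`
  set S := {u ∈ Icc 0 t | IntegrableOn g (Ioc 0 u)}
  have hS0 : (0 : ℝ) ∈ S := ⟨⟨le_rfl, ht0⟩, by simp⟩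
  have hSbdd : BddAbove S := ⟨t, fun u hu => hu.1.2⟩
  set τ := sSup S
  have hτt : τ ≤ t := csSup_le ⟨0, hS0⟩ fun u hu => hu.1.2
  have hbelow (u : ℝ) (hu : u < τ) : ∃ a ∈ S, u < a := exists_lt_of_lt_csSup ⟨0, hS0⟩ hu
  have hintbelow (u : ℝ) (hu : u < τ) : IntegrableOn g (Ioc 0 u) := by
    obtain ⟨a, ha, hua⟩ := hbelow u hu
    exact ha.2.mono_set (Ioc_subset_Ioc_right hua.le)
  have hτ : ¬ IntegrableOn g (Ioc 0 τ) := by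
    intro hτ
    obtain hτt | hτt := hτt.eq_or_lt
    · exact ht (hτt ▸ hτ)
    obtain ⟨u, hτu, hu⟩ := (hgc τ).exists_integrableOn_Ioc hgm
    have hτ0 : 0 ≤ τ := le_csSup hSbdd hS0
    have hmem : min t u ∈ S := by
      refine ⟨⟨hτ0.trans (le_min hτt.le hτu.le), min_le_left _ _⟩, ?_⟩
      rw [← Ioc_union_Ioc_eq_Ioc hτ0 (le_min hτt.le hτu.le)]
      exact hτ.union (hu.mono_set (Ioc_subset_Ioc_right (min_le_right _ _)))
    exact (le_csSup hSbdd hmem).not_gt (lt_min hτt hτu)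
  obtain ⟨u, hu, hKu⟩ := exists_lt_integral_Ioc_of_not_integrableOn hg0
    (fun u hu => hintbelow u hu.2) hτ K
  obtain ⟨a, ha, hua⟩ := hbelow u hu.2
  obtain ⟨n, j, hj, hv⟩ := exists_dyadic_mem_Ico hu.1 hua ha.1.2
  have hgv : IntegrableOn g (Ioc 0 ((j : ℝ) * t / 2 ^ n)) :=
    ha.2.mono_set (Ioc_subset_Ioc_right hv.2.le)
  refine ⟨n, j, hj, hgv, hKu.le.trans ?_⟩
  exact setIntegral_mono_set hgv (Eventually.of_forall fun s => hg0 s)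
    (Eventually.of_forall (Ioc_subset_Ioc_right hv.1))

namespace MeasureTheory.Submartingale

variable {Ω : Type*} {m0 : MeasurableSpace Ω} {μ : Measure Ω}

theorem comp_monotone {ι κ : Type*} [Preorder ι] [Preorder κ] {ℱ : Filtration ι m0}
    {f : ι → Ω → ℝ} (hf : Submartingale f ℱ μ) {τ : κ → ι} (hτ : Monotone τ) :
    Submartingale (fun j => f (τ j))
      ⟨fun j => ℱ (τ j), fun _ _ hij => ℱ.mono (hτ hij), fun _ => ℱ.le _⟩ μ :=
  ⟨fun _ => hf.stronglyAdapted _, fun _ _ hij => hf.2.1 _ _ (hτ hij),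
    fun _ => hf.integrable _⟩

theorem mul_measure_exists_dyadic_le [IsFiniteMeasure μ] {ℱ : Filtration ℝ m0}
    {f : ℝ → Ω → ℝ} (hf : Submartingale f ℱ μ) (hf0 : 0 ≤ f) {t : ℝ} (ht : 0 ≤ t)
    (ε : ℝ≥0) (n : ℕ) :
    ε * μ {ω | ∃ j : ℕ, j ≤ 2 ^ n ∧ (ε : ℝ) ≤ f ((j : ℝ) * t / 2 ^ n) ω}
      ≤ ENNReal.ofReal (∫ ω, f t ω ∂μ) := by
  -- the grid is frozen at `t` after `2 ^ n` steps, to be fed to the `ℕ`-indexed maximal inequality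
  set τ : ℕ → ℝ := fun j => ((min j (2 ^ n) : ℕ) : ℝ) * t / 2 ^ n
  have hτ : Monotone τ := fun i j hij => by
    simp only [τ]
    gcongr
  have hτt : τ (2 ^ n) = t := by simp [τ]
  have hmax := maximal_ineq (hf.comp_monotone hτ) (fun j ω => hf0 _ ω) (ε := ε) (2 ^ n)
  rw [hτt] at hmax
  refine le_trans (mul_le_mul_right (measure_mono fun ω hω => ?_) _)
    (hmax.trans (ENNReal.ofReal_le_ofReal
      (setIntegral_le_integral (hf.integrable t) (Eventually.of_forall fun ω => hf0 t ω))))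
  obtain ⟨j, hj, hjω⟩ := hω
  simp only [mem_ofPred_eq, Finset.le_sup'_iff, Finset.mem_range]
  exact ⟨j, Nat.lt_succ_of_le hj, by simpa only [τ, min_eq_left hj] using hjω⟩

theorem measure_forall_exists_dyadic_le_eq_zero [IsFiniteMeasure μ] {ℱ : Filtration ℝ m0}
    {f : ℝ → Ω → ℝ} (hf : Submartingale f ℱ μ) {t : ℝ} (ht : 0 ≤ t) :
    μ {ω | ∀ K : ℝ, ∃ n j : ℕ, j ≤ 2 ^ n ∧ K ≤ f ((j : ℝ) * t / 2 ^ n) ω} = 0 := by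
  set B := {ω | ∀ K : ℝ, ∃ n j : ℕ, j ≤ 2 ^ n ∧ K ≤ f ((j : ℝ) * t / 2 ^ n) ω}
  set C := ENNReal.ofReal (∫ ω, f⁺ t ω ∂μ)
  set E : ℕ → ℕ → Set Ω := fun K n =>
    {ω | ∃ j : ℕ, j ≤ 2 ^ n ∧ (K : ℝ) ≤ f⁺ ((j : ℝ) * t / 2 ^ n) ω}
  have hE (K : ℕ) : Monotone (E K) := by
    refine monotone_nat_of_le_succ fun n ω ⟨j, hj, hjω⟩ =>
      ⟨2 * j, by rw [pow_succ]; omega, ?_⟩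
    have hgrid : ((2 * j : ℕ) : ℝ) * t / 2 ^ (n + 1) = j * t / 2 ^ n := by
      push_cast [pow_succ]
      field_simp
    rwa [hgrid]
  have hbound (K : ℕ) : K * μ B ≤ C := by
    have hcover : B ⊆ ⋃ n, E K n := fun ω hω => by
      obtain ⟨n, j, hj, hjω⟩ := hω K
      exact mem_iUnion.2 ⟨n, j, hj, hjω.trans le_sup_left⟩
    calc K * μ B ≤ K * ⨆ n, μ (E K n) := by grw [hcover, (hE K).measure_iUnion]
      _ = ⨆ n, (K : ℝ≥0∞) * μ (E K n) := ENNReal.mul_iSup _ _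
      _ ≤ C := iSup_le fun n =>
          hf.pos.mul_measure_exists_dyadic_le (fun _ _ => le_sup_right) ht K n
  have htop : ⊤ * μ B ≤ C := by
    rw [← ENNReal.iSup_natCast, ENNReal.iSup_mul]
    exact iSup_le hbound
  by_contra hB
  rw [ENNReal.top_mul hB] at htop
  exact ENNReal.ofReal_ne_top (top_le_iff.1 htop)

end MeasureTheory.Submartingale

section Fubini

variable {Ω : Type*} [MeasurableSpace Ω] {μ : Measure Ω} {G : ℝ → Ω → ℝ}

theorem integrable_prod_of_integrableOn_integral [SFinite μ]
    (hGm : Measurable fun q : Ω × ℝ => G q.2 q.1) (hG0 : 0 ≤ G)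
    (hGint : ∀ s, Integrable (G s) μ) {S : Set ℝ}
    (hS : IntegrableOn (fun s => ∫ ω, G s ω ∂μ) S) :
    Integrable (fun q : Ω × ℝ => G q.2 q.1) (μ.prod (volume.restrict S)) := by
  refine (integrable_prod_iff' hGm.aestronglyMeasurable).2 ⟨Eventually.of_forall hGint, ?_⟩
  simp only [Real.norm_of_nonneg (hG0 _ _)]
  exact hS

theorem integrable_setIntegral_of_norm_le [IsFiniteMeasure μ]
    (hGm : Measurable fun q : Ω × ℝ => G q.2 q.1) {C : ℝ} (hC : ∀ s ω, ‖G s ω‖ ≤ C)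
    {S : Set ℝ} (hS : volume S < ∞) :
    Integrable (fun ω => ∫ s in S, G s ω) μ :=
  .of_bound hGm.stronglyMeasurable.integral_prod_right'.aestronglyMeasurable _
    (Eventually.of_forall fun _ => norm_setIntegral_le_of_norm_le_const hS fun s _ => hC s _)

end Fubini

section BirthDeath

variable {lam1 gam1 lam2 gam2 : ℕ × ℕ → ℝ} {N : ℕ}

theorem BN_fst (hgam10 : ∀ x2 : ℕ, gam1 (0, x2) = 0) (p : ℕ × ℕ) :
    BN lam1 gam1 lam2 gam2 N (fun p => (p.1 : ℝ)) p = lam1 p - N * gam1 p := by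
  obtain ⟨_ | x1, x2⟩ := p
  · simp [BN, hgam10]
  · simp only [BN]
    push_cast
    ring

theorem integral_BN_fst (hgam10 : ∀ x2 : ℕ, gam1 (0, x2) = 0) {Y : ℝ → ℕ × ℕ} {u : ℝ}
    (hu : 0 ≤ u) (hlam : IntegrableOn (fun s => lam1 (Y s)) (Ioc 0 u))
    (hgam : IntegrableOn (fun s => gam1 (Y s)) (Ioc 0 u)) :
    ∫ s in (0 : ℝ)..u, BN lam1 gam1 lam2 gam2 N (fun p => (p.1 : ℝ)) (Y s)
      = (∫ s in Ioc 0 u, lam1 (Y s)) - N * ∫ s in Ioc 0 u, gam1 (Y s) := by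
  simp only [BN_fst hgam10, intervalIntegral.integral_of_le hu]
  rw [integral_sub hlam (hgam.const_mul _), integral_const_mul]

theorem exists_dyadic_le_sub_integral_BN_fst (hlam1 : ∀ p, 0 ≤ lam1 p)
    (hgam1 : ∀ p, 0 ≤ gam1 p) (hgam10 : ∀ x2 : ℕ, gam1 (0, x2) = 0) (hN : 1 ≤ N)
    {Y : ℝ → ℕ × ℕ} (hYm : Measurable Y) (hYc : ∀ s, ContinuousWithinAt Y (Ici s) s) {t : ℝ}
    (hlam : IntegrableOn (fun s => lam1 (Y s)) (Ioc 0 t))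
    (hgam : ¬ IntegrableOn (fun s => gam1 (Y s)) (Ioc 0 t)) (K : ℝ) :
    ∃ n j : ℕ, j ≤ 2 ^ n ∧ K ≤ ((Y ((j : ℝ) * t / 2 ^ n)).1 : ℝ) - (Y 0).1
      - ∫ s in (0 : ℝ)..(j : ℝ) * t / 2 ^ n,
          BN lam1 gam1 lam2 gam2 N (fun p => (p.1 : ℝ)) (Y s) := by
  have ht : 0 ≤ t := by
    by_contra! h
    exact hgam (by simp [Ioc_eq_empty_of_le h.le])
  obtain ⟨n, j, hj, hgamv, hKv⟩ := exists_dyadic_le_integral_of_not_integrableOn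
    (fun s => hgam1 _) ((measurable_of_countable gam1).comp hYm)
    (fun s => (continuous_of_discreteTopology (f := gam1)).continuousAt.comp_continuousWithinAt
      (hYc s)) hgam (K + (Y 0).1 + ∫ s in Ioc 0 t, lam1 (Y s))
  set v := (j : ℝ) * t / 2 ^ n
  have hv : v ∈ Icc 0 t := dyadic_mem_Icc ht hj
  have hlamv : IntegrableOn (fun s => lam1 (Y s)) (Ioc 0 v) :=
    hlam.mono_set (Ioc_subset_Ioc_right hv.2)
  have hlam_le : ∫ s in Ioc 0 v, lam1 (Y s) ≤ ∫ s in Ioc 0 t, lam1 (Y s) :=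
    setIntegral_mono_set hlam (Eventually.of_forall fun s => hlam1 _)
      (Eventually.of_forall (Ioc_subset_Ioc_right hv.2))
  have hgam_le : ∫ s in Ioc 0 v, gam1 (Y s) ≤ N * ∫ s in Ioc 0 v, gam1 (Y s) :=
    le_mul_of_one_le_left (integral_nonneg fun s => hgam1 _) (by exact_mod_cast hN)
  refine ⟨n, j, hj, ?_⟩
  rw [integral_BN_fst hgam10 hv.1 hlamv hgamv]
  have hYv : (0 : ℝ) ≤ (Y v).1 := Nat.cast_nonneg _
  linarith

theorem sInf_mul_mul_integral_indicator_le (hgam1 : ∀ p, 0 ≤ gam1 p)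
    (hgam10 : ∀ x2 : ℕ, gam1 (0, x2) = 0) {Y : ℝ → ℕ × ℕ} (hYm : Measurable Y) {t : ℝ}
    (ht : 0 ≤ t) (hlam : IntegrableOn (fun s => lam1 (Y s)) (Ioc 0 t))
    (hgam : IntegrableOn (fun s => gam1 (Y s)) (Ioc 0 t)) :
    sInf (gam1 '' {p : ℕ × ℕ | 1 ≤ p.1}) * N
        * ∫ s in (0 : ℝ)..t, (if 1 ≤ (Y s).1 then (1 : ℝ) else 0)
      ≤ (((Y t).1 : ℝ) - (Y 0).1
          - ∫ s in (0 : ℝ)..t, BN lam1 gam1 lam2 gam2 N (fun p => (p.1 : ℝ)) (Y s))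
        + (Y 0).1 + ∫ s in Ioc 0 t, lam1 (Y s) := by
  set γ := sInf (gam1 '' {p : ℕ × ℕ | 1 ≤ p.1})
  have hγ (p : ℕ × ℕ) : γ * (if 1 ≤ p.1 then 1 else 0) ≤ gam1 p := by
    split_ifs with hp
    · exact (mul_one γ).trans_le
        (csInf_le ⟨0, by rintro _ ⟨q, -, rfl⟩; exact hgam1 q⟩ ⟨p, hp, rfl⟩)
    · simpa using hgam1 p
  have hind : IntegrableOn (fun s => γ * if 1 ≤ (Y s).1 then (1 : ℝ) else 0) (Ioc 0 t) :=
    .of_bound measure_Ioc_lt_top ((measurable_of_countable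
      (fun p : ℕ × ℕ => γ * if 1 ≤ p.1 then (1 : ℝ) else 0)).comp hYm).aestronglyMeasurable |γ|
      (Eventually.of_forall fun s => by split_ifs <;> simp)
  have hγint : γ * ∫ s in Ioc 0 t, (if 1 ≤ (Y s).1 then (1 : ℝ) else 0)
      ≤ ∫ s in Ioc 0 t, gam1 (Y s) := by
    rw [← integral_const_mul]
    exact setIntegral_mono_on hind hgam measurableSet_Ioc fun s _ => hγ (Y s)
  rw [integral_BN_fst hgam10 ht hlam hgam, intervalIntegral.integral_of_le ht]
  have hYt : (0 : ℝ) ≤ (Y t).1 := Nat.cast_nonneg _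
  nlinarith [(Nat.cast_nonneg N : (0 : ℝ) ≤ N)]

theorem ae_integrableOn_gam1_comp_of_submartingale {Ω : Type*} {m0 : MeasurableSpace Ω}
    {μ : Measure Ω} [IsFiniteMeasure μ] {ℱ : Filtration ℝ m0} (hlam1 : ∀ p, 0 ≤ lam1 p)
    (hgam1 : ∀ p, 0 ≤ gam1 p) (hgam10 : ∀ x2 : ℕ, gam1 (0, x2) = 0) (hN : 1 ≤ N)
    {X : ℝ → Ω → ℕ × ℕ} (hXm : ∀ ω, Measurable fun s => X s ω)
    (hXc : ∀ ω t, ContinuousWithinAt (fun s => X s ω) (Ici t) t)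
    (hsub : Submartingale (fun t ω => ((X t ω).1 : ℝ) - (X 0 ω).1
      - ∫ s in (0 : ℝ)..t, BN lam1 gam1 lam2 gam2 N (fun p => (p.1 : ℝ)) (X s ω)) ℱ μ)
    {t : ℝ} (ht : 0 ≤ t) (hlam : ∀ᵐ ω ∂μ, IntegrableOn (fun s => lam1 (X s ω)) (Ioc 0 t)) :
    ∀ᵐ ω ∂μ, IntegrableOn (fun s => gam1 (X s ω)) (Ioc 0 t) := by
  filter_upwards [hlam, measure_eq_zero_iff_ae_notMem.1
    (hsub.measure_forall_exists_dyadic_le_eq_zero ht)] with ω hlamω hω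
  by_contra hgamω
  exact hω (exists_dyadic_le_sub_integral_BN_fst hlam1 hgam1 hgam10 hN (hXm ω) (hXc ω)
    hlamω hgamω)

end BirthDeath

theorem stmt_1_general
    {Ω : Type*} {m0 : MeasurableSpace Ω} {μ : Measure Ω} [IsProbabilityMeasure μ]
    (ℱ : Filtration ℝ m0)
    (lam1 gam1 lam2 gam2 : ℕ × ℕ → ℝ)
    (hlam1 : ∀ p, 0 ≤ lam1 p) (hgam1 : ∀ p, 0 ≤ gam1 p)
    (hgam10 : ∀ x2 : ℕ, gam1 (0, x2) = 0)
    (N : ℕ) (hN : 1 ≤ N)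
    (X : ℝ → Ω → ℕ × ℕ)
    (hadapt : Adapted ℱ X)
    (hcadlag : ∀ ω t, ContinuousWithinAt (fun s => X s ω) (Set.Ici t) t)
    (hmart : Martingale
      (fun t ω => ((X t ω).1 : ℝ) - ((X 0 ω).1 : ℝ)
        - ∫ s in (0:ℝ)..t,
            BN lam1 gam1 lam2 gam2 N (fun p => (p.1 : ℝ)) (X s ω)) ℱ μ)
    (h0int : Integrable (fun ω => ((X 0 ω).1 : ℝ)) μ)
    (hlamint : ∀ s : ℝ, Integrable (fun ω => lam1 (X s ω)) μ)
    (hlamII : ∀ t : ℝ, 0 ≤ t →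
      IntervalIntegrable (fun s => ∫ ω, lam1 (X s ω) ∂μ) MeasureTheory.volume 0 t)
    (t : ℝ) (ht : 0 ≤ t) :
    sInf (gam1 '' {p : ℕ × ℕ | 1 ≤ p.1}) * (N : ℝ) *
        (∫ ω, (∫ s in (0:ℝ)..t, if 1 ≤ (X s ω).1 then (1:ℝ) else 0) ∂μ)
      ≤ (∫ ω, ((X 0 ω).1 : ℝ) ∂μ) + ∫ s in (0:ℝ)..t, (∫ ω, lam1 (X s ω) ∂μ) := by
  set M := fun t ω => ((X t ω).1 : ℝ) - ((X 0 ω).1 : ℝ)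
    - ∫ s in (0:ℝ)..t, BN lam1 gam1 lam2 gam2 N (fun p => (p.1 : ℝ)) (X s ω)
  have hXm : Measurable fun q : ℝ × Ω => X q.1 q.2 := measurable_uncurry_of_continuousWithinAt_Ici
    (fun s => (hadapt s).mono (ℱ.le s) le_rfl) hcadlag
  have hpath (ω : Ω) : Measurable fun s => X s ω := hXm.comp measurable_prodMk_right
  have hlam : Integrable (fun q : Ω × ℝ => lam1 (X q.2 q.1)) (μ.prod (volume.restrict (Ioc 0 t))) :=
    integrable_prod_of_integrableOn_integral
      ((measurable_of_countable lam1).comp (hXm.comp measurable_swap)) (fun _ _ => hlam1 _)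
      hlamint ((intervalIntegrable_iff_integrableOn_Ioc_of_le ht).1 (hlamII t ht))
  have hgam := ae_integrableOn_gam1_comp_of_submartingale hlam1 hgam1 hgam10 hN hpath hcadlag
    hmart.submartingale ht hlam.prod_right_ae
  have hind : Integrable (fun ω => ∫ s in (0:ℝ)..t, if 1 ≤ (X s ω).1 then (1:ℝ) else 0) μ := by
    simp only [intervalIntegral.integral_of_le ht]
    exact integrable_setIntegral_of_norm_le (C := 1) ((measurable_of_countable
      (fun p : ℕ × ℕ => if 1 ≤ p.1 then (1 : ℝ) else 0)).comp (hXm.comp measurable_swap))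
      (fun s ω => by split_ifs <;> simp) measure_Ioc_lt_top
  have hEM : ∫ ω, M t ω ∂μ = 0 := by
    simpa [M, setIntegral_univ] using (hmart.setIntegral_eq ht MeasurableSet.univ).symm
  calc _ ≤ ∫ ω, (M t ω + (X 0 ω).1 + ∫ s in Ioc 0 t, lam1 (X s ω)) ∂μ := by
        rw [← integral_const_mul]
        refine integral_mono_ae (hind.const_mul _)
          (((hmart.integrable t).add h0int).add hlam.integral_prod_left) ?_
        filter_upwards [hlam.prod_right_ae, hgam] with ω hlamω hgamω
        exact sInf_mul_mul_integral_indicator_le hgam1 hgam10 (hpath ω) ht hlamω hgamω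
    _ = _ := by
        rw [integral_add (f := fun ω => M t ω + ((X 0 ω).1 : ℝ))
            ((hmart.integrable t).add h0int) hlam.integral_prod_left,
          integral_add (hmart.integrable t) h0int, hEM, zero_add,
          intervalIntegral.integral_of_le ht, integral_integral_swap hlam]

/-- If `γ̲ := inf{γ₁(x₁,x₂) : x₁ ≥ 1} > 0` and `(X₁ᴺ, X₂ᴺ)` satisfies the
martingale property for `B_N` with `f(x₁,x₂) = x₁`, integrable initial first component and
integrable intensity `λ₁`, then for every `t ≥ 0`:
`γ̲ · N · E[∫₀ᵗ 1_{X₁ᴺ(s) ≥ 1} ds] ≤ E[X₁ᴺ(0)] + ∫₀ᵗ E[λ₁(X₁ᴺ(s),X₂ᴺ(s))] ds`. -/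
theorem stmt_1
    {Ω : Type*} {m0 : MeasurableSpace Ω} {μ : Measure Ω} [IsProbabilityMeasure μ]
    (ℱ : Filtration ℝ m0)
    (lam1 gam1 lam2 gam2 : ℕ × ℕ → ℝ)
    (hlam1 : ∀ p, 0 ≤ lam1 p) (hgam1 : ∀ p, 0 ≤ gam1 p)
    (hlam2 : ∀ p, 0 ≤ lam2 p) (hgam2 : ∀ p, 0 ≤ gam2 p)
    (hgam10 : ∀ x2 : ℕ, gam1 (0, x2) = 0) (hgam20 : ∀ x1 : ℕ, gam2 (x1, 0) = 0)
    (N : ℕ) (hN : 1 ≤ N)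
    (hinf : 0 < sInf (gam1 '' {p : ℕ × ℕ | 1 ≤ p.1}))
    (X : ℝ → Ω → ℕ × ℕ)
    (hadapt : Adapted ℱ X)
    (hcadlag : ∀ ω t, ContinuousWithinAt (fun s => X s ω) (Set.Ici t) t)
    (hmart : Martingale
      (fun t ω => ((X t ω).1 : ℝ) - ((X 0 ω).1 : ℝ)
        - ∫ s in (0:ℝ)..t,
            BN lam1 gam1 lam2 gam2 N (fun p => (p.1 : ℝ)) (X s ω)) ℱ μ)
    (h0int : Integrable (fun ω => ((X 0 ω).1 : ℝ)) μ)
    (hlamint : ∀ s : ℝ, Integrable (fun ω => lam1 (X s ω)) μ)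
    (hlamII : ∀ t : ℝ, 0 ≤ t →
      IntervalIntegrable (fun s => ∫ ω, lam1 (X s ω) ∂μ) MeasureTheory.volume 0 t)
    (t : ℝ) (ht : 0 ≤ t) :
    sInf (gam1 '' {p : ℕ × ℕ | 1 ≤ p.1}) * (N : ℝ) *
        (∫ ω, (∫ s in (0:ℝ)..t, if 1 ≤ (X s ω).1 then (1:ℝ) else 0) ∂μ)
      ≤ (∫ ω, ((X 0 ω).1 : ℝ) ∂μ) + ∫ s in (0:ℝ)..t, (∫ ω, lam1 (X s ω) ∂μ) :=
  stmt_1_general ℱ lam1 gam1 lam2 gam2 hlam1 hgam1 hgam10 N hN X hadapt hcadlag hmart h0int hlamint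
    hlamII t ht
end

section
/- Let g₁, g₂, k₂ > 0, let λ₁ : [0,∞) → [0,∞), let h be a probability density on [0,∞), let n ≥ 1, and let g : ℝ → ℝ be differentiable and bounded. Define f : [0,∞)² → ℝ by f(x₁,x₂) = g(x₂ + (k₂/g₁)x₁), and let Aⁿ be the generator with parameters (ĝ₁, k̂₂, λ̂₁, ĥ) = (n g₁, n k₂, λ₁, h) (the scaling (S3)). Then for all (x₁,x₂) ∈ [0,∞)², writing u = x₂ + (k₂/g₁)x₁: Aⁿ f(x₁,x₂) = −g₂ x₂ g′(u) + λ₁(x₂)(∫₀^∞ h(z) g(u + (k₂/g₁)z) dz − g(u)). In particular Aⁿ f does not depend on n, and by the change of variables w = (k₂/g₁)z the jump term can be written with the rescaled density h̄(w) = (g₁/k₂) h((g₁/k₂)w): Aⁿ f(x₁,x₂) = −g₂ x₂ g′(u) + λ₁(x₂)(∫₀^∞ h̄(w) g(u + w) dw − g(u)). -/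
open MeasureTheory Filter

/-
With `c = k₂/g₁` and `u = x₂ + c x₁`, the test function has gradient `g′(u) (c, 1)`, so the
transport term of `Aⁿ` is `(−n g₁ x₁ c + n k₂ x₁ − g₂ x₂) g′(u) = −g₂ x₂ g′(u)`: the scaling (S3)
keeps `n g₁ c = n k₂`, which is why `n` drops out. A jump `x₁ ↦ x₁ + z` moves `u` to `u + c z`,
and the substitution `w = c z` on `(0, ∞)` gives the rescaled density.
-/

/-- The generator `A[ĝ₁, k̂₂, λ̂₁, ĥ]` of the piecewise deterministic model of gene
expression with bursting: for a `C¹` function `f : [0,∞)² → ℝ`,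
`A f(x₁,x₂) = −ĝ₁x₁ ∂f/∂x₁ + (k̂₂x₁ − g₂x₂) ∂f/∂x₂
  + λ̂₁(x₂)(∫₀^∞ ĥ(z) f(x₁+z,x₂) dz − f(x₁,x₂))`. -/
noncomputable def genA (g2 g1h k2h : ℝ) (lam1h : ℝ → ℝ) (hh : ℝ → ℝ)
    (f : ℝ × ℝ → ℝ) (p : ℝ × ℝ) : ℝ :=
  -g1h * p.1 * fderiv ℝ f p (1, 0) + (k2h * p.1 - g2 * p.2) * fderiv ℝ f p (0, 1)
    + lam1h p.2 * ((∫ z in Set.Ioi (0:ℝ), hh z * f (p.1 + z, p.2)) - f p)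

theorem hasFDerivAt_comp_snd_add_mul_fst {g : ℝ → ℝ} {g' c : ℝ} {p : ℝ × ℝ}
    (hg : HasDerivAt g g' (p.2 + c * p.1)) :
    HasFDerivAt (fun q : ℝ × ℝ => g (q.2 + c * q.1))
      (g' • (ContinuousLinearMap.snd ℝ ℝ ℝ + c • ContinuousLinearMap.fst ℝ ℝ ℝ)) p :=
  hg.comp_hasFDerivAt p
    ((ContinuousLinearMap.snd ℝ ℝ ℝ + c • ContinuousLinearMap.fst ℝ ℝ ℝ).hasFDerivAt)

theorem genA_comp_snd_add_mul_fst (g2 a b c : ℝ) (hab : a * c = b) (lam : ℝ → ℝ) (hh : ℝ → ℝ)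
    {g : ℝ → ℝ} (x₁ x₂ : ℝ) (hg : DifferentiableAt ℝ g (x₂ + c * x₁)) :
    genA g2 a b lam hh (fun q => g (q.2 + c * q.1)) (x₁, x₂)
      = -g2 * x₂ * deriv g (x₂ + c * x₁)
        + lam x₂ * ((∫ z in Set.Ioi (0:ℝ), hh z * g ((x₂ + c * x₁) + c * z))
          - g (x₂ + c * x₁)) := by
  have hdrift : -a * x₁ * (deriv g (x₂ + c * x₁) * c) + (b * x₁ - g2 * x₂) * deriv g (x₂ + c * x₁)
      = -g2 * x₂ * deriv g (x₂ + c * x₁) := by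
    rw [← hab]; ring
  have hjump : ∀ z, g (x₂ + c * (x₁ + z)) = g ((x₂ + c * x₁) + c * z) := fun z => by ring_nf
  simp only [genA, (hasFDerivAt_comp_snd_add_mul_fst (p := (x₁, x₂)) hg.hasDerivAt).fderiv,
    hjump, FunLike.coe_smul, FunLike.coe_add, Pi.smul_apply, Pi.add_apply,
    ContinuousLinearMap.coe_snd', ContinuousLinearMap.coe_fst', smul_eq_mul, mul_zero, mul_one,
    add_zero, zero_add]
  rw [hdrift]

theorem integral_Ioi_mul_comp_add_mul {c : ℝ} (hc : 0 < c) (φ G : ℝ → ℝ) (u : ℝ) :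
    ∫ z in Set.Ioi (0:ℝ), φ z * G (u + c * z)
      = ∫ w in Set.Ioi (0:ℝ), c⁻¹ * φ (c⁻¹ * w) * G (u + w) := by
  have hsub := integral_comp_mul_left_Ioi (fun w => φ (c⁻¹ * w) * G (u + w)) 0 hc
  simp only [← mul_assoc, inv_mul_cancel₀ hc.ne', one_mul, mul_zero, smul_eq_mul] at hsub
  simp only [hsub, mul_assoc, integral_const_mul]

theorem stmt_6_general
    (g₁ g₂ k₂ : ℝ) (hg₁ : 0 < g₁) (hk₂ : 0 < k₂)
    (lam1 : ℝ → ℝ)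
    (h : ℝ → ℝ)
    (n : ℕ)
    (g : ℝ → ℝ) (hg : Differentiable ℝ g)
    (x₁ x₂ : ℝ) :
    genA g₂ ((n : ℝ) * g₁) ((n : ℝ) * k₂) lam1 h
        (fun p => g (p.2 + (k₂ / g₁) * p.1)) (x₁, x₂)
      = -g₂ * x₂ * deriv g (x₂ + (k₂ / g₁) * x₁)
        + lam1 x₂ *
          ((∫ z in Set.Ioi (0:ℝ), h z * g ((x₂ + (k₂ / g₁) * x₁) + (k₂ / g₁) * z))
            - g (x₂ + (k₂ / g₁) * x₁)) ∧
    genA g₂ ((n : ℝ) * g₁) ((n : ℝ) * k₂) lam1 h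
        (fun p => g (p.2 + (k₂ / g₁) * p.1)) (x₁, x₂)
      = -g₂ * x₂ * deriv g (x₂ + (k₂ / g₁) * x₁)
        + lam1 x₂ *
          ((∫ w in Set.Ioi (0:ℝ), (g₁ / k₂) * h ((g₁ / k₂) * w) * g ((x₂ + (k₂ / g₁) * x₁) + w))
            - g (x₂ + (k₂ / g₁) * x₁)) := by
  have hscaling : (n : ℝ) * g₁ * (k₂ / g₁) = n * k₂ := by field_simp
  have hgen := genA_comp_snd_add_mul_fst g₂ _ _ _ hscaling lam1 h x₁ x₂ (hg _)
  refine ⟨hgen, hgen.trans ?_⟩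
  rw [integral_Ioi_mul_comp_add_mul (div_pos hk₂ hg₁), inv_div]

/-- Under the scaling (S3), `Aⁿ = A[ng₁, nk₂, λ₁, h]`, for the test function
`f(x₁,x₂) = g(x₂ + (k₂/g₁)x₁)` with `g` differentiable and bounded, writing
`u = x₂ + (k₂/g₁)x₁`:
`Aⁿf(x₁,x₂) = −g₂x₂ g′(u) + λ₁(x₂)(∫₀^∞ h(z) g(u + (k₂/g₁)z) dz − g(u))`,
independently of `n`, and with the rescaled density `h̄(w) = (g₁/k₂)h((g₁/k₂)w)` this equals
`−g₂x₂ g′(u) + λ₁(x₂)(∫₀^∞ h̄(w) g(u + w) dw − g(u))`. -/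
theorem stmt_6
    (g₁ g₂ k₂ : ℝ) (hg₁ : 0 < g₁) (hg₂ : 0 < g₂) (hk₂ : 0 < k₂)
    (lam1 : ℝ → ℝ) (hlam1 : ∀ x : ℝ, 0 ≤ x → 0 ≤ lam1 x)
    (h : ℝ → ℝ) (hhmeas : Measurable h) (hhpos : ∀ z, 0 ≤ h z)
    (hhdens : (∫ z in Set.Ioi (0:ℝ), h z) = 1)
    (n : ℕ) (hn : 1 ≤ n)
    (g : ℝ → ℝ) (hg : Differentiable ℝ g) (hgb : ∃ M : ℝ, ∀ x, |g x| ≤ M)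
    (x₁ x₂ : ℝ) (hx₁ : 0 ≤ x₁) (hx₂ : 0 ≤ x₂) :
    genA g₂ ((n : ℝ) * g₁) ((n : ℝ) * k₂) lam1 h
        (fun p => g (p.2 + (k₂ / g₁) * p.1)) (x₁, x₂)
      = -g₂ * x₂ * deriv g (x₂ + (k₂ / g₁) * x₁)
        + lam1 x₂ *
          ((∫ z in Set.Ioi (0:ℝ), h z * g ((x₂ + (k₂ / g₁) * x₁) + (k₂ / g₁) * z))
            - g (x₂ + (k₂ / g₁) * x₁)) ∧
    genA g₂ ((n : ℝ) * g₁) ((n : ℝ) * k₂) lam1 h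
        (fun p => g (p.2 + (k₂ / g₁) * p.1)) (x₁, x₂)
      = -g₂ * x₂ * deriv g (x₂ + (k₂ / g₁) * x₁)
        + lam1 x₂ *
          ((∫ w in Set.Ioi (0:ℝ), (g₁ / k₂) * h ((g₁ / k₂) * w) * g ((x₂ + (k₂ / g₁) * x₁) + w))
            - g (x₂ + (k₂ / g₁) * x₁)) :=
  stmt_6_general g₁ g₂ k₂ hg₁ hk₂ lam1 h n g hg x₁ x₂
end
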